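/- arXiv:1101.1920 — 4 statements merged into one kernel-verified Lean document; each statement's English description precedes it below -/
import Mathlib

section
/- Let P1, P2 > 0, a ∈ ℝ, and α ∈ [0,1). Then (1/2)·log(1 + P1 + a²·P2 + 2·|a|·√(α·P1·P2)) ≥ (1/2)·log(1 + (1−α)·P2/(1 + α·P2)) + (1/2)·log(1 + (√P1 + |a|·√(α·P2))²) holds if and only if |a| ≥ √(α·P1·P2) + √(1 + P1 + α·P1·P2). (log denotes the natural logarithm.) -/
/-! After clearing the logarithms the inequality is polynomial in `|a|`. Writing
`√(α P1 P2) = √P1 · √(α P2)`, the difference of the two sides factors as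
`(1 - α) P2 (|a|² - 2 |a| √(α P1 P2) - (1 + P1))`, so for `α < 1` the inequality holds exactly
when `|a|` lies beyond the positive root `√(α P1 P2) + √(1 + P1 + α P1 P2)` of this quadratic. -/

open Real

lemma half_log_add_half_log_le_half_log_iff {x y z : ℝ} (hx : 0 < x) (hy : 0 < y) (hz : 0 < z) :
    1 / 2 * log y + 1 / 2 * log z ≤ 1 / 2 * log x ↔ y * z ≤ x := by
  rw [← mul_add, ← log_mul hy.ne' hz.ne', mul_le_mul_iff_right₀ one_half_pos,
    log_le_log_iff (mul_pos hy hz) hx]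

lemma add_sqrt_sq_add_le_iff {s c t : ℝ} (hc : 0 < c) (ht : 0 ≤ t) :
    s + √(s ^ 2 + c) ≤ t ↔ c ≤ t ^ 2 - 2 * t * s := by
  set r := √(s ^ 2 + c)
  have hr : r ^ 2 = s ^ 2 + c := sq_sqrt (by positivity)
  have hsr : |s| < r := by
    rw [← sqrt_sq_eq_abs]
    exact sqrt_lt_sqrt (sq_nonneg s) (by linarith)
  constructor
  · intro h
    nlinarith [sqrt_nonneg (s ^ 2 + c)]
  · intro h
    by_contra! h'
    have : -r < t - s := by linarith [le_abs_self s]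
    nlinarith

lemma rate_gap_eq {P1 P2 α : ℝ} (hP1 : 0 ≤ P1) (hαP2 : 0 ≤ α * P2) (t : ℝ) :
    (1 + P1 + t ^ 2 * P2 + 2 * t * √(α * P1 * P2)) * (1 + α * P2) -
        (1 + P2) * (1 + (√P1 + t * √(α * P2)) ^ 2) =
      (1 - α) * P2 * (t ^ 2 - 2 * t * √(α * P1 * P2) - (1 + P1)) := by
  have hsplit : √(α * P1 * P2) = √P1 * √(α * P2) := by
    rw [← sqrt_mul hP1]
    ring_nf
  rw [hsplit]
  linear_combination (-(1 + P2)) * sq_sqrt hP1 -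
    (1 + P2) * t ^ 2 * sq_sqrt hαP2

theorem stmt_7 (P1 P2 : ℝ) (hP1 : 0 < P1) (hP2 : 0 < P2) (a : ℝ) (α : ℝ)
    (hα : α ∈ Set.Ico (0 : ℝ) 1) :
    (1 / 2) * Real.log (1 + P1 + a ^ 2 * P2 + 2 * |a| * Real.sqrt (α * P1 * P2)) ≥
        (1 / 2) * Real.log (1 + (1 - α) * P2 / (1 + α * P2)) +
          (1 / 2) * Real.log (1 + (Real.sqrt P1 + |a| * Real.sqrt (α * P2)) ^ 2) ↔
      |a| ≥ Real.sqrt (α * P1 * P2) + Real.sqrt (1 + P1 + α * P1 * P2) := by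
  obtain ⟨hα0, hα1⟩ := hα
  have hden : 0 < 1 + α * P2 := by positivity
  have hrate : 1 + (1 - α) * P2 / (1 + α * P2) = (1 + P2) / (1 + α * P2) := by
    field_simp
    ring
  have hroot : 1 + P1 + α * P1 * P2 = √(α * P1 * P2) ^ 2 + (1 + P1) := by
    rw [sq_sqrt (by positivity)]
    ring
  rw [ge_iff_le, hrate, half_log_add_half_log_le_half_log_iff (by positivity) (by positivity)
      (by positivity), div_mul_eq_mul_div, div_le_iff₀ hden, ← sub_nonneg, ← sq_abs a,
    rate_gap_eq hP1.le (by positivity), mul_nonneg_iff_of_pos_left (mul_pos (sub_pos.2 hα1) hP2), sub_nonneg,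
    ge_iff_le, hroot, add_sqrt_sq_add_le_iff (by positivity) (abs_nonneg a)]
end

section
/- Let P1, P2 > 0 and a ∈ ℝ with |a| ≥ √(P1·P2) + √(1 + P1 + P1·P2). Then for every α ∈ [0,1], (1/2)·log(1 + (√P1 + |a|·√(α·P2))²) + (1/2)·log(1 + (1−α)·P2/(1 + α·P2)) ≤ (1/2)·log(1 + P1 + a²·P2 + 2·|a|·√(α·P1·P2)). (log denotes the natural logarithm.) -/
set_option maxHeartbeats 1000000


theorem stmt_11 (P1 P2 : ℝ) (hP1 : 0 < P1) (hP2 : 0 < P2) (a : ℝ)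
    (ha : |a| ≥ Real.sqrt (P1 * P2) + Real.sqrt (1 + P1 + P1 * P2)) :
    ∀ α ∈ Set.Icc (0 : ℝ) 1,
      (1 / 2) * Real.log (1 + (Real.sqrt P1 + |a| * Real.sqrt (α * P2)) ^ 2) +
          (1 / 2) * Real.log (1 + (1 - α) * P2 / (1 + α * P2)) ≤
        (1 / 2) * Real.log (1 + P1 + a ^ 2 * P2 + 2 * |a| * Real.sqrt (α * P1 * P2)) := by
  intro α hα
  obtain ⟨hα0, hα1⟩ := hα
  set t := |a| with htdef
  have ht0 : 0 ≤ t := abs_nonneg a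
  set s := Real.sqrt P1 with hsdef
  have hs0 : 0 ≤ s := Real.sqrt_nonneg _
  have hs2 : s ^ 2 = P1 := Real.sq_sqrt hP1.le
  set u := Real.sqrt (α * P2) with hudef
  have hu0 : 0 ≤ u := Real.sqrt_nonneg _
  have hu2 : u ^ 2 = α * P2 := Real.sq_sqrt (mul_nonneg hα0 hP2.le)
  set p := Real.sqrt P2 with hpdef
  have hp0 : 0 ≤ p := Real.sqrt_nonneg _
  have hp2 : p ^ 2 = P2 := Real.sq_sqrt hP2.le
  have hup : u ≤ p := by
    apply Real.sqrt_le_sqrt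
    nlinarith
  have hv : Real.sqrt (P1 * P2) = s * p := Real.sqrt_mul hP1.le P2
  set w := Real.sqrt (1 + P1 + P1 * P2) with hwdef
  have hw0 : 0 ≤ w := Real.sqrt_nonneg _
  have hw2 : w ^ 2 = 1 + P1 + P1 * P2 := Real.sq_sqrt (by nlinarith)
  have ha2 : a ^ 2 = t ^ 2 := (sq_abs a).symm
  have hsu : Real.sqrt (α * P1 * P2) = s * u := by
    rw [hsdef, hudef, ← Real.sqrt_mul hP1.le]
    ring_nf
  -- key inequality: t^2 ≥ 1 + s^2 + 2*s*t*u
  have hkey : 1 + s ^ 2 + 2 * s * t * u ≤ t ^ 2 := by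
    have h1 : s * p + w ≤ t := by rw [hv] at ha; linarith
    nlinarith [sq_nonneg (t - s * p - w), mul_nonneg (mul_nonneg hs0 ht0) (sub_nonneg.2 hup),
      mul_nonneg hs0 hp0, mul_nonneg (mul_nonneg hs0 hp0) hw0]
  have hden : (0:ℝ) < 1 + α * P2 := by nlinarith
  have hA : (0:ℝ) < 1 + (s + t * u) ^ 2 := by positivity
  have hBeq : 1 + (1 - α) * P2 / (1 + α * P2) = (1 + P2) / (1 + α * P2) := by
    field_simp
    ring
  have hB : (0:ℝ) < 1 + (1 - α) * P2 / (1 + α * P2) := by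
    rw [hBeq]; positivity
  have hC : (0:ℝ) < 1 + P1 + a ^ 2 * P2 + 2 * t * Real.sqrt (α * P1 * P2) := by
    rw [ha2, hsu]
    nlinarith [mul_nonneg (mul_nonneg ht0 hs0) hu0, sq_nonneg t]
  -- product inequality
  have hprod : (1 + (s + t * u) ^ 2) * (1 + (1 - α) * P2 / (1 + α * P2)) ≤
      1 + P1 + a ^ 2 * P2 + 2 * t * Real.sqrt (α * P1 * P2) := by
    rw [hBeq, ha2, hsu, ← mul_div_assoc, div_le_iff₀ hden, ← hs2, ← hu2]
    have hfac : 0 ≤ (P2 - u ^ 2) * (t ^ 2 - 1 - s ^ 2 - 2 * s * t * u) := by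
      apply mul_nonneg
      · nlinarith
      · linarith
    nlinarith [hfac]
  calc (1 / 2) * Real.log (1 + (s + t * u) ^ 2) +
          (1 / 2) * Real.log (1 + (1 - α) * P2 / (1 + α * P2))
      = (1 / 2) * Real.log ((1 + (s + t * u) ^ 2) * (1 + (1 - α) * P2 / (1 + α * P2))) := by
        rw [Real.log_mul hA.ne' hB.ne']; ring
    _ ≤ (1 / 2) * Real.log (1 + P1 + a ^ 2 * P2 + 2 * t * Real.sqrt (α * P1 * P2)) := by
        have := Real.log_le_log (by positivity) hprod
        linarith
end

section
/- Let A, B, C ≥ 0 be real numbers. Then the set {(r1, r2) ∈ ℝ² : 0 ≤ r1, 0 ≤ r2, r2 ≤ B, r1 + r2 ≤ A + B, r1 + r2 ≤ C} equals the set {(r1 + t, r2 − t) : (r1, r2) ∈ ℝ², 0 ≤ r1, 0 ≤ r2, r1 ≤ A, r2 ≤ B, r1 + r2 ≤ C, 0 ≤ t ≤ r2}. -/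
theorem stmt_12 (A B C : ℝ) (hA : 0 ≤ A) (hB : 0 ≤ B) (hC : 0 ≤ C) :
    {p : ℝ × ℝ | 0 ≤ p.1 ∧ 0 ≤ p.2 ∧ p.2 ≤ B ∧ p.1 + p.2 ≤ A + B ∧ p.1 + p.2 ≤ C} =
      {q : ℝ × ℝ | ∃ r1 r2 t : ℝ, 0 ≤ r1 ∧ 0 ≤ r2 ∧ r1 ≤ A ∧ r2 ≤ B ∧ r1 + r2 ≤ C ∧
        0 ≤ t ∧ t ≤ r2 ∧ q = (r1 + t, r2 - t)} := by
  ext p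
  simp only [Set.mem_setOf_eq]
  constructor
  · rintro ⟨h1, h2, h3, h4, h5⟩
    rcases le_total p.1 A with h | h
    · exact ⟨p.1, p.2, 0, h1, h2, h, h3, h5, le_refl 0, h2, by simp⟩
    · refine ⟨A, p.2 + (p.1 - A), p.1 - A, hA, by linarith, le_refl A,
        by linarith, by linarith, by linarith, by linarith, ?_⟩
      ext <;> simp <;> ring
  · rintro ⟨r1, r2, t, h1, h2, h3, h4, h5, h6, h7, rfl⟩
    refine ⟨by simp; linarith, by simp; linarith, by simp; linarith, ?_, ?_⟩ <;>
      simp <;> linarith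
end

section
/- Let P1, P2 > 0 and a ∈ ℝ with |a| ≥ √(1 + P1). Define, for α ∈ [0,1], A(α) = (1/2)·log(1 + (√P1 + |a|·√(α·P2))²), B(α) = (1/2)·log(1 + (1−α)·P2/(1 + α·P2)), C(α) = (1/2)·log(1 + P1 + a²·P2 + 2·|a|·√(α·P1·P2)). Then the union over α ∈ [0,1] of the sets {(r1, r2) ∈ ℝ² : 0 ≤ r1, 0 ≤ r2, r1 ≤ A(α), r2 ≤ B(α), r1 + r2 ≤ C(α)} equals the union over α ∈ [0,1] of the sets {(r1, r2) ∈ ℝ² : 0 ≤ r1, 0 ≤ r2, r2 ≤ B(α), r1 + r2 ≤ A(α) + B(α), r1 + r2 ≤ C(α)}. (log denotes the natural logarithm.) -/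
set_option maxHeartbeats 1000000

lemma key_ineq (q b u v P2 : ℝ) (hq : 0 ≤ q) (hb : 0 ≤ b)
    (hu : 0 ≤ u) (huv : u ≤ v) (hvP : v^2 ≤ P2)
    (hlt : (1 + (q + b*v)^2) * (1 + P2) < (1 + q^2 + b^2*P2 + 2*b*q*v) * (1 + v^2)) :
    (1 + (q + b*u)^2) * (1 + v^2) ≤ (1 + (q + b*v)^2) * (1 + u^2) := by
  have h1 : 2*b*q*v ≤ b^2 - 1 - q^2 := by
    nlinarith [mul_nonneg (mul_nonneg hb hq) (le_trans hu huv), sq_nonneg v]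
  have hv : 0 ≤ v := le_trans hu huv
  nlinarith [mul_nonneg (mul_nonneg (sub_nonneg.2 huv) (sub_nonneg.2 h1)) (add_nonneg hu hv),
    mul_nonneg (mul_nonneg (sub_nonneg.2 huv) (mul_nonneg (mul_nonneg hb hq) (by norm_num : (0:ℝ) ≤ 2))) (by nlinarith [sq_nonneg v] : (0:ℝ) ≤ 1 + v^2)]

lemma union_eq_abs (A B C : ℝ → ℝ)
    (hcont : ContinuousOn A (Set.Icc 0 1))
    (hCmono : ∀ ⦃α α'⦄, α ∈ Set.Icc (0:ℝ) 1 → α' ∈ Set.Icc (0:ℝ) 1 → α ≤ α' → C α ≤ C α')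
    (hCA1 : C 1 ≤ A 1)
    (hkey : ∀ ⦃α α'⦄, α ∈ Set.Icc (0:ℝ) 1 → α' ∈ Set.Icc (0:ℝ) 1 → α ≤ α' →
      A α' + B α' < C α' → A α + B α ≤ A α' + B α') :
    (⋃ α ∈ Set.Icc (0:ℝ) 1,
        {p : ℝ × ℝ | 0 ≤ p.1 ∧ 0 ≤ p.2 ∧ p.1 ≤ A α ∧ p.2 ≤ B α ∧ p.1 + p.2 ≤ C α}) =
      ⋃ α ∈ Set.Icc (0:ℝ) 1,
        {p : ℝ × ℝ | 0 ≤ p.1 ∧ 0 ≤ p.2 ∧ p.2 ≤ B α ∧ p.1 + p.2 ≤ A α + B α ∧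
          p.1 + p.2 ≤ C α} := by
  ext p
  simp only [Set.mem_iUnion, Set.mem_setOf_eq, exists_prop]
  constructor
  · rintro ⟨α, hα, h1, h2, hA, hB, hC⟩
    exact ⟨α, hα, h1, h2, hB, add_le_add hA hB, hC⟩
  · rintro ⟨α, hα, h1, h2, hB, hAB, hC⟩
    by_cases hr : p.1 ≤ A α
    · exact ⟨α, hα, h1, h2, hr, hB, hC⟩
    · push_neg at hr
      obtain ⟨h0α, hα1⟩ := hα
      have hα01 : α ∈ Set.Icc (0:ℝ) 1 := ⟨h0α, hα1⟩
      have h1mem : (1:ℝ) ∈ Set.Icc (0:ℝ) 1 := ⟨by norm_num, le_refl 1⟩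
      have hsub : Set.Icc α 1 ⊆ Set.Icc (0:ℝ) 1 := Set.Icc_subset_Icc h0α le_rfl
      have hCC1 : C α ≤ C 1 := hCmono hα01 h1mem hα1
      have hr1A1 : p.1 ≤ A 1 := by linarith
      obtain ⟨α', hα', hAα'⟩ := intermediate_value_Icc hα1 (hcont.mono hsub) ⟨hr.le, hr1A1⟩
      have hα'01 : α' ∈ Set.Icc (0:ℝ) 1 := hsub hα'
      have hCα' : p.1 + p.2 ≤ C α' := le_trans hC (hCmono hα01 hα'01 hα'.1)
      have hABα' : p.1 + p.2 ≤ A α' + B α' := by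
        by_cases hc : A α' + B α' < C α'
        · exact le_trans hAB (hkey hα01 hα'01 hα'.1 hc)
        · push_neg at hc; exact le_trans hCα' hc
      exact ⟨α', hα'01, h1, h2, le_of_eq hAα'.symm, by linarith, hCα'⟩

theorem stmt_13 (P1 P2 : ℝ) (hP1 : 0 < P1) (hP2 : 0 < P2) (a : ℝ)
    (ha : |a| ≥ Real.sqrt (1 + P1)) :
    (⋃ α ∈ Set.Icc (0 : ℝ) 1,
        {p : ℝ × ℝ | 0 ≤ p.1 ∧ 0 ≤ p.2 ∧
          p.1 ≤ (1 / 2) * Real.log (1 + (Real.sqrt P1 + |a| * Real.sqrt (α * P2)) ^ 2) ∧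
          p.2 ≤ (1 / 2) * Real.log (1 + (1 - α) * P2 / (1 + α * P2)) ∧
          p.1 + p.2 ≤
            (1 / 2) * Real.log (1 + P1 + a ^ 2 * P2 + 2 * |a| * Real.sqrt (α * P1 * P2))}) =
      ⋃ α ∈ Set.Icc (0 : ℝ) 1,
        {p : ℝ × ℝ | 0 ≤ p.1 ∧ 0 ≤ p.2 ∧
          p.2 ≤ (1 / 2) * Real.log (1 + (1 - α) * P2 / (1 + α * P2)) ∧
          p.1 + p.2 ≤
            (1 / 2) * Real.log (1 + (Real.sqrt P1 + |a| * Real.sqrt (α * P2)) ^ 2) +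
              (1 / 2) * Real.log (1 + (1 - α) * P2 / (1 + α * P2)) ∧
          p.1 + p.2 ≤
            (1 / 2) * Real.log (1 + P1 + a ^ 2 * P2 + 2 * |a| * Real.sqrt (α * P1 * P2))} := by
  set b := |a| with hbdef
  set q := Real.sqrt P1 with hqdef
  clear_value b q
  have hb0 : (0:ℝ) ≤ b := by rw [hbdef]; exact abs_nonneg a
  have hq0 : (0:ℝ) ≤ q := by rw [hqdef]; exact Real.sqrt_nonneg _
  have hqsq : q ^ 2 = P1 := by rw [hqdef]; exact Real.sq_sqrt hP1.le
  have hab : b ^ 2 = a ^ 2 := by rw [hbdef]; exact sq_abs a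
  -- positivity of the log arguments
  have hA_pos : ∀ α : ℝ, (0:ℝ) < 1 + (q + b * Real.sqrt (α * P2)) ^ 2 := fun α => by positivity
  have hB_pos : ∀ α : ℝ, α ∈ Set.Icc (0:ℝ) 1 → (0:ℝ) < 1 + (1 - α) * P2 / (1 + α * P2) := by
    rintro α ⟨h0, h1⟩
    have hd : (0:ℝ) < 1 + α * P2 := by nlinarith
    have : (0:ℝ) ≤ (1 - α) * P2 / (1 + α * P2) :=
      div_nonneg (mul_nonneg (by linarith) hP2.le) hd.le
    linarith
  have hC_pos : ∀ α : ℝ, (0:ℝ) < 1 + P1 + a ^ 2 * P2 + 2 * b * Real.sqrt (α * P1 * P2) := by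
    intro α
    have := Real.sqrt_nonneg (α * P1 * P2)
    nlinarith [sq_nonneg a]
  have hB_eq : ∀ α : ℝ, α ∈ Set.Icc (0:ℝ) 1 →
      1 + (1 - α) * P2 / (1 + α * P2) = (1 + P2) / (1 + α * P2) := by
    rintro α ⟨h0, h1⟩
    have hd : (0:ℝ) < 1 + α * P2 := by nlinarith
    field_simp
    ring
  apply union_eq_abs
  · -- continuity
    apply Continuous.continuousOn
    have hc : Continuous fun α : ℝ => 1 + (q + b * Real.sqrt (α * P2)) ^ 2 := by
      fun_prop
    exact continuous_const.mul (hc.log (fun α => (hA_pos α).ne'))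
  · -- C monotone
    intro α α' hα hα' hle
    have harg : Real.sqrt (α * P1 * P2) ≤ Real.sqrt (α' * P1 * P2) :=
      Real.sqrt_le_sqrt (by nlinarith [mul_le_mul_of_nonneg_right hle (mul_pos hP1 hP2).le])
    have h2 : 1 + P1 + a ^ 2 * P2 + 2 * b * Real.sqrt (α * P1 * P2) ≤
        1 + P1 + a ^ 2 * P2 + 2 * b * Real.sqrt (α' * P1 * P2) := by nlinarith
    have := (Real.log_le_log_iff (hC_pos α) (hC_pos α')).2 h2
    linarith
  · -- C 1 ≤ A 1
    have e : 1 + P1 + a ^ 2 * P2 + 2 * b * Real.sqrt (1 * P1 * P2) =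
        1 + (q + b * Real.sqrt (1 * P2)) ^ 2 := by
      rw [one_mul, one_mul, Real.sqrt_mul hP1.le, ← hqdef]
      have e2 : Real.sqrt P2 ^ 2 = P2 := Real.sq_sqrt hP2.le
      nlinarith [e2, hqsq, hab]
    rw [e]
  · -- key step
    intro α α' hα hα' hle hlt
    have hd : (0:ℝ) < 1 + α * P2 := by nlinarith [hα.1]
    have hd' : (0:ℝ) < 1 + α' * P2 := by nlinarith [hα'.1]
    set u := Real.sqrt (α * P2) with hudef
    set v := Real.sqrt (α' * P2) with hvdef
    clear_value u v
    have hu0 : 0 ≤ u := by rw [hudef]; exact Real.sqrt_nonneg _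
    have hv0 : 0 ≤ v := by rw [hvdef]; exact Real.sqrt_nonneg _
    have huv : u ≤ v := by
      rw [hudef, hvdef]
      exact Real.sqrt_le_sqrt (by nlinarith [mul_le_mul_of_nonneg_right hle hP2.le])
    have hu2 : u ^ 2 = α * P2 := by
      rw [hudef]; exact Real.sq_sqrt (mul_nonneg hα.1 hP2.le)
    have hv2 : v ^ 2 = α' * P2 := by
      rw [hvdef]; exact Real.sq_sqrt (mul_nonneg hα'.1 hP2.le)
    have hvP : v ^ 2 ≤ P2 := by nlinarith [hα'.2]
    have hsplit : Real.sqrt (α' * P1 * P2) = q * v := by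
      rw [hvdef, hqdef, ← Real.sqrt_mul hP1.le]
      congr 1; ring
    have hsplit2 : Real.sqrt (α * P1 * P2) = q * u := by
      rw [hudef, hqdef, ← Real.sqrt_mul hP1.le]
      congr 1; ring
    -- translate hlt into an inequality between log arguments
    have hApos' : (0:ℝ) < 1 + (q + b * v) ^ 2 := by positivity
    have hBpos' := hB_pos α' hα'
    have hCpos' := hC_pos α'
    have hlog : Real.log ((1 + (q + b * v) ^ 2) * (1 + (1 - α') * P2 / (1 + α' * P2))) <
        Real.log (1 + P1 + a ^ 2 * P2 + 2 * b * Real.sqrt (α' * P1 * P2)) := by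
      rw [Real.log_mul hApos'.ne' hBpos'.ne']
      linarith
    have hargs : (1 + (q + b * v) ^ 2) * (1 + (1 - α') * P2 / (1 + α' * P2)) <
        1 + P1 + a ^ 2 * P2 + 2 * b * Real.sqrt (α' * P1 * P2) :=
      (Real.log_lt_log_iff (mul_pos hApos' hBpos') hCpos').1 hlog
    rw [hB_eq α' hα', hsplit] at hargs
    have hargs2 : (1 + (q + b * v) ^ 2) * (1 + P2) <
        (1 + q ^ 2 + b ^ 2 * P2 + 2 * b * q * v) * (1 + v ^ 2) := by
      rw [← mul_div_assoc] at hargs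
      have h3 := (div_lt_iff₀ hd').1 hargs
      have heq : (1 + P1 + a ^ 2 * P2 + 2 * b * (q * v)) * (1 + α' * P2) =
          (1 + q ^ 2 + b ^ 2 * P2 + 2 * b * q * v) * (1 + v ^ 2) := by
        rw [hqsq, hab, hv2]; ring
      linarith
    have hkey := key_ineq q b u v P2 hq0 hb0 hu0 huv hvP hargs2
    -- conclude: A α + B α ≤ A α' + B α'
    have hApos : (0:ℝ) < 1 + (q + b * u) ^ 2 := by positivity
    have hBpos := hB_pos α hα
    have hprod : (1 + (q + b * u) ^ 2) * (1 + (1 - α) * P2 / (1 + α * P2)) ≤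
        (1 + (q + b * v) ^ 2) * (1 + (1 - α') * P2 / (1 + α' * P2)) := by
      rw [hB_eq α hα, hB_eq α' hα']
      rw [← mul_div_assoc, ← mul_div_assoc, div_le_div_iff₀ hd hd', ← hu2, ← hv2]
      nlinarith [mul_le_mul_of_nonneg_right hkey (show (0:ℝ) ≤ 1 + P2 by linarith)]
    have hloge : Real.log ((1 + (q + b * u) ^ 2) * (1 + (1 - α) * P2 / (1 + α * P2))) ≤
        Real.log ((1 + (q + b * v) ^ 2) * (1 + (1 - α') * P2 / (1 + α' * P2))) :=
      (Real.log_le_log_iff (mul_pos hApos hBpos) (mul_pos hApos' hBpos')).2 hprod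
    rw [Real.log_mul hApos.ne' hBpos.ne', Real.log_mul hApos'.ne' hBpos'.ne'] at hloge
    linarith
end
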